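/- Let G be a group with subgroups A, B ≤ G such that B normalizes A, A ∩ B = {e}, and G = AB (inner semidirect product G = [AB]). Then for every atomic subset S ⊆ G, the subgroup ⟨S⟩ ∩ A equals ⟨(S ∩ A)^{⟨S ∩ B⟩}⟩, the subgroup generated by the set of conjugates { b a b⁻¹ : a ∈ S ∩ A, b ∈ ⟨S ∩ B⟩ }. In other words, ⟨S⟩ ∩ A is the conjugate closure of S ∩ A under ⟨S ∩ B⟩. -/

import Mathlib

/-!
Put `H = ⟨S ∩ B⟩` and `C = ⟨(S ∩ A)^H⟩`. Then `C ≤ A` because `B` normalizes `A`, and `H`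
normalizes `C` by construction, so `C ⊔ H` is the set product `C H` and contains `⟨S⟩`.
An element `c h ∈ C H` that lies in `A` has `h ∈ A ∩ B = 1`, hence `⟨S⟩ ∩ A ≤ C`;
the reverse inclusion is clear.
-/

open Subgroup
open scoped Pointwise

section

variable {G : Type*} [Group G]

/-- The paper's `X ^ H`. -/
def conjugatesBy (X : Set G) (H : Subgroup G) : Set G :=
  {x | ∃ a ∈ X, ∃ b ∈ H, x = b * a * b⁻¹}

theorem subset_conjugatesBy (X : Set G) (H : Subgroup G) : X ⊆ conjugatesBy X H :=
  fun a ha ↦ ⟨a, ha, 1, one_mem H, by group⟩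

theorem conjugatesBy_subset_of_le {X : Set G} {H K : Subgroup G} (hX : X ⊆ K) (hH : H ≤ K) :
    conjugatesBy X H ⊆ K := by
  rintro _ ⟨a, ha, b, hb, rfl⟩
  exact mul_mem (mul_mem (hH hb) (hX ha)) (inv_mem (hH hb))

theorem conjugatesBy_subset_of_le_normalizer {X : Set G} {H A : Subgroup G} (hX : X ⊆ A)
    (hH : H ≤ normalizer (A : Set G)) : conjugatesBy X H ⊆ A := by
  rintro _ ⟨a, ha, b, hb, rfl⟩
  exact (mem_normalizer_iff.1 (hH hb) a).1 (hX ha)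

theorem le_normalizer_closure_conjugatesBy (X : Set G) (H : Subgroup G) :
    H ≤ normalizer (closure (conjugatesBy X H) : Set G) := by
  rw [le_normalizer_closure_iff]
  rintro h hh _ ⟨a, ha, b, hb, rfl⟩
  exact subset_closure ⟨a, ha, h * b, mul_mem hh hb, by group⟩

theorem sup_inf_eq_of_le_normalizer {C H A : Subgroup G} (hCA : C ≤ A)
    (hH : H ≤ normalizer (C : Set G)) (hHA : H ⊓ A = ⊥) : (C ⊔ H) ⊓ A = C := by
  apply SetLike.coe_injective
  rw [coe_inf, coe_mul_of_right_le_normalizer_left C H hH, ← mul_inf_assoc C H A hCA, hHA,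
    coe_bot, Set.singleton_one, mul_one]

end

theorem stmt_1_general {G : Type*} [Group G] (A B : Subgroup G)
    (hnorm : B ≤ Subgroup.normalizer (A : Set G))
    (hint : A ⊓ B = ⊥)
    (S : Set G) (hS : S ⊆ (A : Set G) ∪ (B : Set G)) :
    Subgroup.closure S ⊓ A =
      Subgroup.closure
        {x | ∃ a ∈ S ∩ (A : Set G), ∃ b ∈ Subgroup.closure (S ∩ (B : Set G)),
          x = b * a * b⁻¹} := by
  set H := closure (S ∩ (B : Set G))
  change closure S ⊓ A = closure (conjugatesBy (S ∩ A) H)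
  have hHB : H ≤ B := (closure_le B).2 Set.inter_subset_right
  have hCA : closure (conjugatesBy (S ∩ A) H) ≤ A :=
    (closure_le A).2 (conjugatesBy_subset_of_le_normalizer Set.inter_subset_right
      (hHB.trans hnorm))
  have hS_le : closure S ≤ closure (conjugatesBy (S ∩ A) H) ⊔ H := by
    rw [closure_le]
    intro s hs
    rcases hS hs with hsA | hsB
    · exact mem_sup_left (subset_closure (subset_conjugatesBy _ _ ⟨hs, hsA⟩))
    · exact mem_sup_right (subset_closure ⟨hs, hsB⟩)
  have hHA : H ⊓ A = ⊥ := eq_bot_mono (inf_le_inf_right A hHB) (inf_comm A B ▸ hint)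
  apply le_antisymm
  · calc closure S ⊓ A ≤ (closure (conjugatesBy (S ∩ A) H) ⊔ H) ⊓ A :=
          inf_le_inf_right A hS_le
      _ = closure (conjugatesBy (S ∩ A) H) :=
          sup_inf_eq_of_le_normalizer hCA (le_normalizer_closure_conjugatesBy _ _) hHA
  · refine le_inf ((closure_le _).2 (conjugatesBy_subset_of_le ?_ ?_)) hCA
    · exact Set.inter_subset_left.trans subset_closure
    · exact closure_mono Set.inter_subset_left

/-- Let `G = [AB]` be an inner semidirect product of subgroups `A, B ≤ G`.
Then for every atomic subset `S ⊆ G` (i.e. `S ⊆ A ∪ B`), the subgroup `⟨S⟩ ∩ A` equals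
`⟨(S ∩ A)^{⟨S ∩ B⟩}⟩`, the subgroup generated by the conjugates
`{ b a b⁻¹ : a ∈ S ∩ A, b ∈ ⟨S ∩ B⟩ }`. -/
theorem stmt_1 {G : Type*} [Group G] (A B : Subgroup G)
    (hnorm : B ≤ Subgroup.normalizer (A : Set G))
    (hint : A ⊓ B = ⊥)
    (hprod : ∀ g : G, ∃ a ∈ A, ∃ b ∈ B, g = a * b)
    (S : Set G) (hS : S ⊆ (A : Set G) ∪ (B : Set G)) :
    Subgroup.closure S ⊓ A =
      Subgroup.closure
        {x | ∃ a ∈ S ∩ (A : Set G), ∃ b ∈ Subgroup.closure (S ∩ (B : Set G)),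
          x = b * a * b⁻¹} :=
  stmt_1_general A B hnorm hint S hS
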